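/- arXiv:2305.04514 — 6 statements merged into one kernel-verified Lean document; each statement's English description precedes it below -/
import Mathlib

section
/- Let (Ω, ℱ) be a measurable space and let 𝒮 be a nonempty set of probability measures on Ω that is closed under the countable mixtures ∑_{k=0}^∞ 2^{-(k+1)} P_k, i.e., for every sequence (P_k)_{k∈ℕ} in 𝒮 the probability measure P = ∑_{k=0}^∞ 2^{-(k+1)} P_k belongs to 𝒮. Let f : Ω → [0,∞] be measurable and suppose that ∫_Ω f dP < ∞ for every P ∈ 𝒮. Then sup_{P∈𝒮} ∫_Ω f dP < ∞. -/
/-!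
If the integrals of `f` were unbounded over `𝒮`, one could pick `Pₖ ∈ 𝒮` with
`∫ f dPₖ > 2^(k+1)`. The mixture `∑ₖ 2^{-(k+1)} Pₖ` lies in `𝒮`, yet each of its terms
contributes more than `1` to its integral of `f`, which is therefore infinite.
-/

open MeasureTheory
open scoped ENNReal

namespace MeasureTheory

variable {Ω : Type*} [MeasurableSpace Ω]

theorem lintegral_sum_smul_eq_top {c : ℕ → ℝ≥0∞} {P : ℕ → Measure Ω} {f : Ω → ℝ≥0∞}
    (hP : ∀ k, (c k)⁻¹ < ∫⁻ ω, f ω ∂P k) :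
    ∫⁻ ω, f ω ∂Measure.sum (fun k => c k • P k) = ⊤ := by
  have hterm : ∀ k, 1 ≤ c k * ∫⁻ ω, f ω ∂P k := fun k =>
    (ENNReal.inv_le_iff_le_mul (fun _ hc0 => by simpa [hc0] using hP k) fun _ => (hP k).ne_bot).1
      (hP k).le
  rw [lintegral_sum_measure, eq_top_iff,
    ← ENNReal.tsum_const_eq_top_of_ne_zero (α := ℕ) one_ne_zero]
  exact ENNReal.tsum_le_tsum fun k => (lintegral_smul_measure (c k) f).symm ▸ hterm k

theorem iSup_lintegral_lt_top_of_sum_smul_mem {𝒮 : Set (Measure Ω)} {c : ℕ → ℝ≥0∞}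
    (hc : ∀ k, c k ≠ 0)
    (h𝒮mix : ∀ P : ℕ → Measure Ω, (∀ k, P k ∈ 𝒮) → Measure.sum (fun k => c k • P k) ∈ 𝒮)
    {f : Ω → ℝ≥0∞} (hfint : ∀ P ∈ 𝒮, ∫⁻ ω, f ω ∂P < ⊤) :
    (⨆ P ∈ 𝒮, ∫⁻ ω, f ω ∂P) < ⊤ := by
  by_contra! hsup
  have hlarge : ∀ k, ∃ Q ∈ 𝒮, (c k)⁻¹ < ∫⁻ ω, f ω ∂Q := fun k =>
    lt_biSup_iff.1 (lt_of_lt_of_le (ENNReal.inv_lt_top.2 (pos_iff_ne_zero.2 (hc k))) hsup)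
  choose P hP𝒮 hPint using hlarge
  exact (hfint _ (h𝒮mix P hP𝒮)).ne (lintegral_sum_smul_eq_top hPint)

end MeasureTheory

theorem stmt_1_general {Ω : Type*} [MeasurableSpace Ω] (𝒮 : Set (Measure Ω))
    (h𝒮mix : ∀ P : ℕ → Measure Ω, (∀ k, P k ∈ 𝒮) →
      Measure.sum (fun k => ((2 : ℝ≥0∞)⁻¹ ^ (k + 1)) • P k) ∈ 𝒮)
    (f : Ω → ℝ≥0∞)
    (hfint : ∀ P ∈ 𝒮, ∫⁻ ω, f ω ∂P < ⊤) :
    (⨆ P ∈ 𝒮, ∫⁻ ω, f ω ∂P) < ⊤ :=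
  iSup_lintegral_lt_top_of_sum_smul_mem (fun k => by simp) h𝒮mix hfint

/-- If a nonempty set `𝒮` of probability measures is closed under the countable mixtures
`∑ₖ 2^{-(k+1)} Pₖ`, and `f : Ω → [0,∞]` is measurable with finite integral under every member
of `𝒮`, then the integrals are uniformly bounded over `𝒮`. -/
theorem stmt_1 {Ω : Type*} [MeasurableSpace Ω] (𝒮 : Set (Measure Ω))
    (h𝒮ne : 𝒮.Nonempty)
    (h𝒮prob : ∀ P ∈ 𝒮, IsProbabilityMeasure P)
    (h𝒮mix : ∀ P : ℕ → Measure Ω, (∀ k, P k ∈ 𝒮) →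
      Measure.sum (fun k => ((2 : ℝ≥0∞)⁻¹ ^ (k + 1)) • P k) ∈ 𝒮)
    (f : Ω → ℝ≥0∞) (hf : Measurable f)
    (hfint : ∀ P ∈ 𝒮, ∫⁻ ω, f ω ∂P < ⊤) :
    (⨆ P ∈ 𝒮, ∫⁻ ω, f ω ∂P) < ⊤ :=
  stmt_1_general 𝒮 h𝒮mix f hfint
end

section
/- Let X be a measurable space, K a Markov kernel on X given X, Δ ⊆ X a measurable set that is absorbing for K, and η a finite nonnegative measure on X. Suppose a finite nonnegative measure ξ on X satisfies the fixed-point equation ξ = (η + ξK)|_{Δᶜ}, i.e., ξ(B) = η(B ∩ Δᶜ) + (ξK)(B ∩ Δᶜ) for every measurable B. Then for every t ∈ ℕ, ξ = ∑_{k=0}^{t} (ηK^k)|_{Δᶜ} + (ξK^{t+1})|_{Δᶜ}. -/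
/-!
Because `Δ` is absorbing, mass in `Δ` never leaves it, so `(μ K^n)|_{Δᶜ}` depends only on
`μ|_{Δᶜ}`. Substituting the fixed-point equation into `(ξ K^{t+1})|_{Δᶜ}` therefore gives
`(η K^{t+1})|_{Δᶜ} + (ξ K^{t+2})|_{Δᶜ}`, and the identity follows by induction on `t`.
-/

open MeasureTheory ProbabilityTheory
open scoped ENNReal

/-- `iterK K μ t` is the measure `μ K^t` obtained by letting a Markov kernel `K` act `t`
times on the measure `μ`. -/
noncomputable def iterK {X : Type*} [MeasurableSpace X] (K : Kernel X X)
    (μ : Measure X) : ℕ → Measure X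
  | 0 => μ
  | (t + 1) => (iterK K μ t).bind fun x => K x

section iterK

variable {X : Type*} [MeasurableSpace X] (K : Kernel X X)

lemma iterK_add (μ ν : Measure X) (n : ℕ) :
    iterK K (μ + ν) n = iterK K μ n + iterK K ν n := by
  induction n with
  | zero => rfl
  | succ n ih => rw [iterK, ih, Measure.comp_add]; rfl

lemma iterK_bind (μ : Measure X) (n : ℕ) :
    iterK K (μ.bind fun x => K x) n = iterK K μ (n + 1) := by
  induction n with
  | zero => rfl
  | succ n ih => rw [iterK, ih]; rfl

variable {K} {Δ : Set X} (hΔ : MeasurableSet Δ) (hK : ∀ x ∈ Δ, ∀ᵐ y ∂K x, y ∈ Δ)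
include hΔ hK

lemma ae_mem_iterK_of_absorbing {μ : Measure X} (hμ : ∀ᵐ x ∂μ, x ∈ Δ) (n : ℕ) :
    ∀ᵐ x ∂iterK K μ n, x ∈ Δ := by
  induction n with
  | zero => exact hμ
  | succ n ih =>
    refine Measure.ae_comp_of_ae_ae hΔ ?_
    filter_upwards [ih] with x hx using hK x hx

lemma restrict_compl_iterK_restrict_compl (μ : Measure X) (n : ℕ) :
    (iterK K (μ.restrict Δᶜ) n).restrict Δᶜ = (iterK K μ n).restrict Δᶜ := by
  have hΔ_null : (iterK K (μ.restrict Δ) n).restrict Δᶜ = 0 :=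
    Measure.restrict_eq_zero.2 <| mem_ae_iff.1 <|
      ae_mem_iterK_of_absorbing hΔ hK (ae_restrict_mem hΔ) n
  conv_rhs => rw [← Measure.restrict_add_restrict_compl (μ := μ) hΔ]
  rw [add_comm, iterK_add, Measure.restrict_add, hΔ_null, add_zero]

end iterK

theorem stmt_5_general {X : Type*} [MeasurableSpace X] (K : Kernel X X) [IsMarkovKernel K]
    (Δ : Set X) (hΔ : MeasurableSet Δ) (habs : ∀ x ∈ Δ, K x Δ = 1)
    (η : Measure X)
    (ξ : Measure X)
    (hξ : ξ = (η + ξ.bind fun x => K x).restrict Δᶜ) :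
    ∀ t : ℕ, ξ = (∑ k ∈ Finset.range (t + 1), (iterK K η k).restrict Δᶜ)
      + (iterK K ξ (t + 1)).restrict Δᶜ := by
  have hK : ∀ x ∈ Δ, ∀ᵐ y ∂K x, y ∈ Δ := fun x hx => (mem_ae_iff_prob_eq_one hΔ).2 (habs x hx)
  have step : ∀ n, (iterK K ξ (n + 1)).restrict Δᶜ
      = (iterK K η (n + 1)).restrict Δᶜ + (iterK K ξ (n + 2)).restrict Δᶜ := fun n => by
    conv_lhs => rw [hξ]
    rw [restrict_compl_iterK_restrict_compl hΔ hK, iterK_add, Measure.restrict_add, iterK_bind]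
  intro t
  induction t with
  | zero => simpa [iterK, Measure.restrict_add] using hξ
  | succ t ih => rw [Finset.sum_range_succ, add_assoc, ← step, ← ih]

/-- If a finite measure `ξ` satisfies the fixed-point equation `ξ = (η + ξK)|_{Δᶜ}`, where `Δ`
is absorbing for the Markov kernel `K`, then for every `t`,
`ξ = ∑_{k=0}^{t} (η K^k)|_{Δᶜ} + (ξ K^{t+1})|_{Δᶜ}`. -/
theorem stmt_5 {X : Type*} [MeasurableSpace X] (K : Kernel X X) [IsMarkovKernel K]
    (Δ : Set X) (hΔ : MeasurableSet Δ) (habs : ∀ x ∈ Δ, K x Δ = 1)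
    (η : Measure X) [IsFiniteMeasure η]
    (ξ : Measure X) [IsFiniteMeasure ξ]
    (hξ : ξ = (η + ξ.bind fun x => K x).restrict Δᶜ) :
    ∀ t : ℕ, ξ = (∑ k ∈ Finset.range (t + 1), (iterK K η k).restrict Δᶜ)
      + (iterK K ξ (t + 1)).restrict Δᶜ :=
  stmt_5_general K Δ hΔ habs η ξ hξ
end

section
/- Let X be a measurable space, λ a probability measure on X, K a Markov kernel on X given X with K(·|x) ≪ λ for every x ∈ X, Δ ⊆ X a measurable set, and η a probability measure on X with η ≪ λ. Suppose a finite nonnegative measure ξ on X satisfies ξ = (η + ξK)|_{Δᶜ}. Then ξ(Δ) = 0 and ξ ≪ λ. If moreover λ ≪ η, then ξ and λ|_{Δᶜ} are mutually absolutely continuous: for every measurable B, ξ(B) = 0 if and only if λ(B ∩ Δᶜ) = 0. -/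
open MeasureTheory ProbabilityTheory
open scoped ENNReal

/-! Since `ξ` is a restriction to `Δᶜ` of `η + ξK`, it lives on `Δᶜ`, and it inherits
absolute continuity with respect to `λ` from `η` and from the kernel: `ξK ≪ λ` holds whatever
`ξ` is. Conversely `ξ ≥ η|_{Δᶜ}`, so `λ ≪ η` gives `λ|_{Δᶜ} ≪ ξ`. -/

namespace MeasureTheory.Measure

variable {α β : Type*} [MeasurableSpace α] [MeasurableSpace β]

theorem bind_absolutelyContinuous {m : Measure α} {f : α → Measure β} {μ : Measure β}
    (h : ∀ᵐ a ∂m, f a ≪ μ) : m.bind f ≪ μ :=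
  AbsolutelyContinuous.mk fun _ hs hμs =>
    le_antisymm
      ((bind_apply_le f hs).trans_eq
        ((lintegral_congr_ae (h.mono fun _ ha => ha hμs)).trans lintegral_zero))
      bot_le

end MeasureTheory.Measure

theorem stmt_7_general {X : Type*} [MeasurableSpace X] (lam : Measure X)
    (K : Kernel X X) (hac : ∀ x, K x ≪ lam)
    (Δ : Set X) (hΔ : MeasurableSet Δ)
    (η : Measure X) (hη : η ≪ lam)
    (ξ : Measure X)
    (hξ : ξ = (η + ξ.bind fun x => K x).restrict Δᶜ) :
    ξ Δ = 0 ∧ ξ ≪ lam ∧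
      (lam ≪ η → ∀ B : Set X, MeasurableSet B → (ξ B = 0 ↔ lam (B ∩ Δᶜ) = 0)) := by
  have hξ_ac : ξ ≪ lam.restrict Δᶜ := by
    rw [hξ]
    exact (hη.add_left (Measure.bind_absolutelyContinuous (.of_forall hac))).restrict Δᶜ
  have hη_le : η.restrict Δᶜ ≤ ξ := by
    rw [hξ]
    exact Measure.restrict_mono le_rfl (Measure.le_add_right le_rfl)
  refine ⟨hξ_ac (by simp [Measure.restrict_apply hΔ]),
    hξ_ac.trans (Measure.absolutelyContinuous_of_le Measure.restrict_le_self),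
    fun hlam B hB => ?_⟩
  rw [← Measure.restrict_apply hB]
  exact ⟨fun h => (hlam.restrict Δᶜ).trans (Measure.absolutelyContinuous_of_le hη_le) h,
    fun h => hξ_ac h⟩

/-- If `ξ` is a finite measure satisfying `ξ = (η + ξK)|_{Δᶜ}`, with `K(·|x) ≪ λ` for all `x`
and `η ≪ λ`, then `ξ(Δ) = 0` and `ξ ≪ λ`; if moreover `λ ≪ η` then `ξ` and `λ|_{Δᶜ}` are
mutually absolutely continuous. -/
theorem stmt_7 {X : Type*} [MeasurableSpace X] (lam : Measure X) [IsProbabilityMeasure lam]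
    (K : Kernel X X) [IsMarkovKernel K] (hac : ∀ x, K x ≪ lam)
    (Δ : Set X) (hΔ : MeasurableSet Δ)
    (η : Measure X) [IsProbabilityMeasure η] (hη : η ≪ lam)
    (ξ : Measure X) [IsFiniteMeasure ξ]
    (hξ : ξ = (η + ξ.bind fun x => K x).restrict Δᶜ) :
    ξ Δ = 0 ∧ ξ ≪ lam ∧
      (lam ≪ η → ∀ B : Set X, MeasurableSet B → (ξ B = 0 ↔ lam (B ∩ Δᶜ) = 0)) :=
  stmt_7_general lam K hac Δ hΔ η hη ξ hξ
end

section
/- Let X be a measurable space, K a Markov kernel on X given X, Δ ⊆ X a measurable set that is absorbing for K, and η a probability measure on X with ∑_{k=0}^∞ (ηK^k)(Δᶜ) < ∞. Define the finite measure γ := ∑_{k=0}^∞ (ηK^k)|_{Δᶜ}. Then for every t ∈ ℕ, (γK^t)(Δᶜ) = ∑_{k=t}^∞ (ηK^k)(Δᶜ). -/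
/-!
Mass started in the absorbing set `Δ` never leaves it, so `(μK^t)(Δᶜ)` only depends on
`μ|_{Δᶜ}`. Since `μ ↦ μK^t` commutes with countable sums, `γK^t = ∑ₖ ((ηK^k)|_{Δᶜ})K^t`, and its
mass on `Δᶜ` is `∑ₖ (ηK^{k+t})(Δᶜ)`.
-/

open MeasureTheory ProbabilityTheory
open scoped ENNReal

lemma MeasureTheory.Measure.bind_add {α β : Type*} [MeasurableSpace α] [MeasurableSpace β]
    (μ ν : Measure α) {f : α → Measure β} (hf : Measurable f) :
    (μ + ν).bind f = μ.bind f + ν.bind f := by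
  ext s hs
  simp only [Measure.add_apply, Measure.bind_apply hs hf.aemeasurable, lintegral_add_measure]

namespace iterK

variable {X : Type*} [MeasurableSpace X] (K : Kernel X X)

lemma add_measure (μ ν : Measure X) (t : ℕ) :
    iterK K (μ + ν) t = iterK K μ t + iterK K ν t := by
  induction t with
  | zero => rfl
  | succ t ih => rw [iterK, ih, Measure.bind_add _ _ K.measurable]; rfl

lemma sum_measure {ι : Type*} (μ : ι → Measure X) (t : ℕ) :
    iterK K (Measure.sum μ) t = Measure.sum fun i => iterK K (μ i) t := by
  induction t with
  | zero => rfl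
  | succ t ih => rw [iterK, ih, Measure.bind_sum _ _ K.measurable.aemeasurable]; rfl

lemma iterK_add (μ : Measure X) (k t : ℕ) :
    iterK K (iterK K μ k) t = iterK K μ (k + t) := by
  induction t with
  | zero => rfl
  | succ t ih => rw [iterK, ih, ← Nat.add_assoc]; rfl

variable {K} {Δ : Set X} (hΔ : MeasurableSet Δ) (hstay : ∀ x ∈ Δ, K x Δᶜ = 0)
include hΔ hstay

lemma apply_compl_eq_zero {ν : Measure X} (hν : ν Δᶜ = 0) (t : ℕ) : iterK K ν t Δᶜ = 0 := by
  induction t with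
  | zero => exact hν
  | succ t ih =>
    rw [iterK, Measure.bind_apply hΔ.compl K.measurable.aemeasurable,
      lintegral_eq_zero_iff (K.measurable_coe hΔ.compl)]
    have hae : ∀ᵐ x ∂iterK K ν t, x ∈ Δ := ae_iff.2 ih
    filter_upwards [hae] with x hx using hstay x hx

lemma restrict_compl_apply_compl (μ : Measure X) (t : ℕ) :
    iterK K (μ.restrict Δᶜ) t Δᶜ = iterK K μ t Δᶜ := by
  have hΔ_null : μ.restrict Δ Δᶜ = 0 := by
    rw [Measure.restrict_apply hΔ.compl, Set.compl_inter_self, measure_empty]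
  conv_rhs => rw [← Measure.restrict_compl_add_restrict (μ := μ) hΔ]
  rw [add_measure, Measure.add_apply, apply_compl_eq_zero hΔ hstay hΔ_null, add_zero]

end iterK

theorem stmt_10_general {X : Type*} [MeasurableSpace X] (K : Kernel X X) [IsMarkovKernel K]
    (Δ : Set X) (hΔ : MeasurableSet Δ) (habs : ∀ x ∈ Δ, K x Δ = 1)
    (η : Measure X) :
    ∀ t : ℕ, iterK K (Measure.sum fun k => (iterK K η k).restrict Δᶜ) t Δᶜ
      = ∑' k : ℕ, iterK K η (t + k) Δᶜ := by
  have hstay : ∀ x ∈ Δ, K x Δᶜ = 0 := fun x hx => (prob_compl_eq_zero_iff hΔ).2 (habs x hx)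
  intro t
  rw [iterK.sum_measure, Measure.sum_apply _ hΔ.compl]
  refine tsum_congr fun k => ?_
  rw [iterK.restrict_compl_apply_compl hΔ hstay, iterK.iterK_add, Nat.add_comm]

/-- If `Δ` is absorbing for the Markov kernel `K` and `∑ₖ (η K^k)(Δᶜ) < ∞`, then the
occupation measure `γ := ∑ₖ (η K^k)|_{Δᶜ}` satisfies `(γ K^t)(Δᶜ) = ∑_{k ≥ t} (η K^k)(Δᶜ)`
for every `t`. -/
theorem stmt_10 {X : Type*} [MeasurableSpace X] (K : Kernel X X) [IsMarkovKernel K]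
    (Δ : Set X) (hΔ : MeasurableSet Δ) (habs : ∀ x ∈ Δ, K x Δ = 1)
    (η : Measure X) [IsProbabilityMeasure η]
    (hsum : ∑' t, iterK K η t Δᶜ < ⊤) :
    ∀ t : ℕ, iterK K (Measure.sum fun k => (iterK K η k).restrict Δᶜ) t Δᶜ
      = ∑' k : ℕ, iterK K η (t + k) Δᶜ :=
  stmt_10_general K Δ hΔ habs η
end

section
/- Let X and A be measurable spaces, Q a Markov kernel from X × A to X, π a Markov kernel from X to A, and define the Markov kernel Q_π on X given X by Q_π(B|x) := ∫_A Q(B|x,a) π(da|x). Let Δ ⊆ X be measurable with Q(Δ|x,a) = 1 for every (x,a) ∈ Δ × A, and let η be a probability measure on X with ∑_{t=0}^∞ (ηQ_π^t)(Δᶜ) < ∞. Define γ := ∑_{t=0}^∞ (ηQ_π^t)|_{Δᶜ} and let μ := γ ⊗ π be the measure on X × A determined by μ(B × C) = ∫_B π(C|x) dγ(x). Then μ is a finite measure whose X-marginal μ^X equals γ, and μ^X = (η + μQ)|_{Δᶜ}, where (μQ)(B) := ∫_{X×A} Q(B|x,a) dμ(x,a); that is, μ^X(B) = η(B ∩ Δᶜ)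 + ∫_{X×A} Q(B ∩ Δᶜ|x,a) dμ(x,a) for every measurable B ⊆ X. -/
open MeasureTheory ProbabilityTheory
open scoped ENNReal

section

variable {X A : Type*} [MeasurableSpace X] [MeasurableSpace A]

lemma iterK_succ_apply (K : Kernel X X) (η : Measure X) (t : ℕ) {B : Set X}
    (hB : MeasurableSet B) :
    iterK K η (t + 1) B = ∫⁻ x, K x B ∂(iterK K η t) :=
  Measure.bind_apply hB K.measurable.aemeasurable

lemma sum_restrict_iterK_apply (K : Kernel X X) (η : Measure X) (s : Set X) {B : Set X}
    (hB : MeasurableSet B) :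
    (Measure.sum fun t => (iterK K η t).restrict s) B = ∑' t, iterK K η t (B ∩ s) := by
  simp only [Measure.sum_apply _ hB, Measure.restrict_apply hB]

lemma lintegral_sum_restrict_iterK (K : Kernel X X) (η : Measure X) {s B : Set X}
    (hB : MeasurableSet B) (hK : ∀ x ∉ s, K x B = 0) :
    ∫⁻ x, K x B ∂(Measure.sum fun t => (iterK K η t).restrict s) =
      ∑' t, iterK K η (t + 1) B := by
  have hsupp : (fun x => K x B).support ⊆ s := fun x hx => by_contra fun hxs => hx (hK x hxs)
  rw [lintegral_sum_measure]
  congr 1 with t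
  rw [setLIntegral_eq_of_support_subset hsupp, iterK_succ_apply K η t hB]

lemma Measure.eq_compProd_of_apply_prod {γ : Measure X} [IsFiniteMeasure γ]
    {κ : Kernel X A} [IsFiniteKernel κ] {μ : Measure (X × A)}
    (hμ : ∀ (B : Set X) (C : Set A), MeasurableSet B → MeasurableSet C →
      μ (B ×ˢ C) = ∫⁻ x in B, κ x C ∂γ) :
    μ = γ ⊗ₘ κ :=
  (Measure.ext_prod fun hB hC => by rw [Measure.compProd_apply_prod hB hC, hμ _ _ hB hC]).symm

lemma averaged_kernel_apply_compl_eq_zero {Q : Kernel (X × A) X} [IsMarkovKernel Q]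
    {π : Kernel X A} {Qpi : Kernel X X}
    (hQpi : ∀ (x : X) (B : Set X), MeasurableSet B → Qpi x B = ∫⁻ a, Q (x, a) B ∂(π x))
    {Δ : Set X} (hΔ : MeasurableSet Δ) {x : X} (habsQ : ∀ a : A, Q (x, a) Δ = 1) :
    Qpi x Δᶜ = 0 := by
  simp [hQpi x _ hΔ.compl, (prob_compl_eq_zero_iff hΔ).2 (habsQ _)]

end

theorem stmt_12_general {X A : Type*} [MeasurableSpace X] [MeasurableSpace A]
    (Q : Kernel (X × A) X) [IsMarkovKernel Q]
    (π : Kernel X A) [IsMarkovKernel π]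
    (Qpi : Kernel X X)
    (hQpi : ∀ (x : X) (B : Set X), MeasurableSet B →
      Qpi x B = ∫⁻ a, Q (x, a) B ∂(π x))
    (Δ : Set X) (hΔ : MeasurableSet Δ)
    (habsQ : ∀ x ∈ Δ, ∀ a : A, Q (x, a) Δ = 1)
    (η : Measure X)
    (hsum : ∑' t, iterK Qpi η t Δᶜ < ⊤)
    (μ : Measure (X × A))
    (hμ : ∀ (B : Set X) (C : Set A), MeasurableSet B → MeasurableSet C →
      μ (B ×ˢ C) = ∫⁻ x in B, π x C ∂(Measure.sum fun t => (iterK Qpi η t).restrict Δᶜ)) :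
    IsFiniteMeasure μ ∧
    μ.fst = (Measure.sum fun t => (iterK Qpi η t).restrict Δᶜ) ∧
    ∀ B : Set X, MeasurableSet B →
      μ.fst B = η (B ∩ Δᶜ) + ∫⁻ p, Q p (B ∩ Δᶜ) ∂μ := by
  set γ := Measure.sum fun t => (iterK Qpi η t).restrict Δᶜ
  have : IsFiniteMeasure γ :=
    ⟨by simpa [γ, sum_restrict_iterK_apply _ _ _ MeasurableSet.univ] using hsum⟩
  obtain rfl : μ = γ ⊗ₘ π := Measure.eq_compProd_of_apply_prod hμ
  refine ⟨inferInstance, Measure.fst_compProd γ π, fun B hB => ?_⟩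
  have hB' : MeasurableSet (B ∩ Δᶜ) := hB.inter hΔ.compl
  have hvanish : ∀ x ∉ Δᶜ, Qpi x (B ∩ Δᶜ) = 0 := fun x hx =>
    measure_mono_null Set.inter_subset_right
      (averaged_kernel_apply_compl_eq_zero hQpi hΔ (habsQ x (not_not.1 hx)))
  calc (γ ⊗ₘ π).fst B
      = iterK Qpi η 0 (B ∩ Δᶜ) + ∑' t, iterK Qpi η (t + 1) (B ∩ Δᶜ) := by
        rw [Measure.fst_compProd, sum_restrict_iterK_apply _ _ _ hB,
          tsum_eq_zero_add' ENNReal.summable]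
    _ = η (B ∩ Δᶜ) + ∫⁻ x, Qpi x (B ∩ Δᶜ) ∂γ := by
        rw [lintegral_sum_restrict_iterK _ _ hB' hvanish]; rfl
    _ = η (B ∩ Δᶜ) + ∫⁻ p, Q p (B ∩ Δᶜ) ∂(γ ⊗ₘ π) := by
        rw [Measure.lintegral_compProd (Q.measurable_coe hB')]
        simp only [← hQpi _ _ hB']

/-- The occupation measure `μ = γ ⊗ π` of a stationary Markov strategy `π` (with
`γ := ∑ₜ (η Q_π^t)|_{Δᶜ}`) is a finite measure whose `X`-marginal equals `γ` and satisfies the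
characteristic equation `μ^X = (η + μQ)|_{Δᶜ}`. -/
theorem stmt_12 {X A : Type*} [MeasurableSpace X] [MeasurableSpace A]
    (Q : Kernel (X × A) X) [IsMarkovKernel Q]
    (π : Kernel X A) [IsMarkovKernel π]
    (Qpi : Kernel X X) [IsMarkovKernel Qpi]
    (hQpi : ∀ (x : X) (B : Set X), MeasurableSet B →
      Qpi x B = ∫⁻ a, Q (x, a) B ∂(π x))
    (Δ : Set X) (hΔ : MeasurableSet Δ)
    (habsQ : ∀ x ∈ Δ, ∀ a : A, Q (x, a) Δ = 1)
    (η : Measure X) [IsProbabilityMeasure η]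
    (hsum : ∑' t, iterK Qpi η t Δᶜ < ⊤)
    (μ : Measure (X × A))
    (hμ : ∀ (B : Set X) (C : Set A), MeasurableSet B → MeasurableSet C →
      μ (B ×ˢ C) = ∫⁻ x in B, π x C ∂(Measure.sum fun t => (iterK Qpi η t).restrict Δᶜ)) :
    IsFiniteMeasure μ ∧
    μ.fst = (Measure.sum fun t => (iterK Qpi η t).restrict Δᶜ) ∧
    ∀ B : Set X, MeasurableSet B →
      μ.fst B = η (B ∩ Δᶜ) + ∫⁻ p, Q p (B ∩ Δᶜ) ∂μ :=
  stmt_12_general Q π Qpi hQpi Δ hΔ habsQ η hsum μ hμ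
end

section
/- Let X be a countable set (with the discrete σ-algebra) and λ a probability measure on X. Let N ≥ 1 and for each i ∈ {1,…,N} let A^i be a compact metric space, and let A = A^1 × ⋯ × A^N with the product topology. For each i and each n ∈ ℕ let π_n^i, π^i : X → P(A^i) be maps into the probability measures on A^i such that for every x ∈ X and every i, π_n^i(x) converges weakly to π^i(x) as n → ∞. Let f : X × A → ℝ be such that a ↦ f(x,a) is continuous for every x ∈ X and |f(x,a)| ≤ F(x) for all (x,a), where ∑_{x∈X} F(x) λ({x}) < ∞. Then ∑_{x∈X} λ({x}) ∫_A f(x,a) d(π_n^1(x) × ⋯ × π_n^N(x))(a) → ∑_{x∈X} λ({x}) ∫_A f(x,a) d(π^1(x) × ⋯ × π^N(x))(a) as n → ∞. -/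
open MeasureTheory Filter
open scoped ENNReal Topology BoundedContinuousFunction

/-!
Weak convergence of the factors gives weak convergence of the product measures, since
`ProbabilityMeasure.pi` is continuous for separable metrizable factors. Hence each summand
converges, and the summands are dominated by `F x * λ{x}`, which is summable; Tannery's theorem
(dominated convergence for series) finishes the proof.
-/

namespace MeasureTheory.ProbabilityMeasure

variable {ι β : Type*} [Fintype ι] {α : ι → Type*} [∀ i, MeasurableSpace (α i)]
  [∀ i, TopologicalSpace (α i)] [∀ i, SecondCountableTopology (α i)]
  [∀ i, TopologicalSpace.PseudoMetrizableSpace (α i)] [∀ i, OpensMeasurableSpace (α i)]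

theorem tendsto_pi {l : Filter β} {μs : β → ∀ i, ProbabilityMeasure (α i)}
    {μ : ∀ i, ProbabilityMeasure (α i)} (h : ∀ i, Tendsto (fun n => μs n i) l (𝓝 (μ i))) :
    Tendsto (fun n => ProbabilityMeasure.pi (μs n)) l (𝓝 (ProbabilityMeasure.pi μ)) :=
  (continuous_pi.tendsto μ).comp (tendsto_pi_nhds.2 h)

theorem tendsto_integral_pi {l : Filter β} {μs : β → ∀ i, ProbabilityMeasure (α i)}
    {μ : ∀ i, ProbabilityMeasure (α i)} (h : ∀ i, Tendsto (fun n => μs n i) l (𝓝 (μ i)))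
    (f : (∀ i, α i) →ᵇ ℝ) :
    Tendsto (fun n => ∫ a, f a ∂(Measure.pi fun i => (μs n i : Measure (α i)))) l
      (𝓝 (∫ a, f a ∂(Measure.pi fun i => (μ i : Measure (α i))))) :=
  tendsto_iff_forall_integral_tendsto.1 (tendsto_pi h) f

end MeasureTheory.ProbabilityMeasure

theorem stmt_13_general {X : Type*} [MeasurableSpace X]
    (lam : Measure X)
    (N : ℕ)
    (A : Fin N → Type*) [∀ i, MetricSpace (A i)] [∀ i, CompactSpace (A i)]
    [∀ i, MeasurableSpace (A i)] [∀ i, BorelSpace (A i)]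
    (πn : ℕ → ∀ i : Fin N, X → ProbabilityMeasure (A i))
    (π : ∀ i : Fin N, X → ProbabilityMeasure (A i))
    (hconv : ∀ (x : X) (i : Fin N), Tendsto (fun n => πn n i x) atTop (nhds (π i x)))
    (f : X → (∀ i, A i) → ℝ) (hfc : ∀ x, Continuous (f x))
    (F : X → ℝ) (hF : ∀ x a, |f x a| ≤ F x)
    (hFsum : ∑' x, ENNReal.ofReal (F x) * lam {x} ≠ ⊤) :
    Tendsto
      (fun n => ∑' x, (lam {x}).toReal *
        ∫ a, f x a ∂(Measure.pi fun i => (πn n i x : Measure (A i))))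
      atTop
      (nhds (∑' x, (lam {x}).toReal *
        ∫ a, f x a ∂(Measure.pi fun i => (π i x : Measure (A i))))) := by
  -- `ENNReal.ofReal` truncates at `0`, so the hypothesis only controls the positive part of `F`.
  have hsummable : Summable fun x => max (F x) 0 * (lam {x}).toReal := by
    simpa [ENNReal.toReal_mul, ENNReal.toReal_ofReal'] using ENNReal.summable_toReal hFsum
  refine tendsto_tsum_of_dominated_convergence hsummable (fun x => ?_)
    (Eventually.of_forall fun n x => ?_)
  · exact (ProbabilityMeasure.tendsto_integral_pi (hconv x)
      (BoundedContinuousFunction.mkOfCompact ⟨f x, hfc x⟩)).const_mul _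
  · have hintegral : ‖∫ a, f x a ∂(Measure.pi fun i => (πn n i x : Measure (A i)))‖ ≤ F x := by
      simpa using norm_integral_le_of_norm_le_const
        (μ := Measure.pi fun i => (πn n i x : Measure (A i)))
        (Eventually.of_forall fun a => (Real.norm_eq_abs (f x a)).trans_le (hF x a))
    rw [norm_mul, Real.norm_of_nonneg ENNReal.toReal_nonneg, mul_comm]
    gcongr
    exact hintegral.trans (le_max_left _ _)

/-- For a countable state space `X` with reference probability measure `λ`, compact metric
action spaces `A¹,…,A^N`, and Young measures `πₙⁱ(x) → πⁱ(x)` converging weakly for every state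
`x` and player `i`, the integrals of any function `f(x,a)`, continuous in `a` and dominated by a
`λ`-integrable function `F`, against the product measures converge:
`∑ₓ λ{x} ∫ f(x,a) d(πₙ¹(x) × ⋯ × πₙᴺ(x)) → ∑ₓ λ{x} ∫ f(x,a) d(π¹(x) × ⋯ × πᴺ(x))`. -/
theorem stmt_13 {X : Type*} [Countable X] [MeasurableSpace X] [DiscreteMeasurableSpace X]
    (lam : Measure X) [IsProbabilityMeasure lam]
    (N : ℕ) (hN : 1 ≤ N)
    (A : Fin N → Type*) [∀ i, MetricSpace (A i)] [∀ i, CompactSpace (A i)]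
    [∀ i, MeasurableSpace (A i)] [∀ i, BorelSpace (A i)]
    (πn : ℕ → ∀ i : Fin N, X → ProbabilityMeasure (A i))
    (π : ∀ i : Fin N, X → ProbabilityMeasure (A i))
    (hconv : ∀ (x : X) (i : Fin N), Tendsto (fun n => πn n i x) atTop (nhds (π i x)))
    (f : X → (∀ i, A i) → ℝ) (hfc : ∀ x, Continuous (f x))
    (F : X → ℝ) (hF : ∀ x a, |f x a| ≤ F x)
    (hFsum : ∑' x, ENNReal.ofReal (F x) * lam {x} ≠ ⊤) :
    Tendsto
      (fun n => ∑' x, (lam {x}).toReal *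
        ∫ a, f x a ∂(Measure.pi fun i => (πn n i x : Measure (A i))))
      atTop
      (nhds (∑' x, (lam {x}).toReal *
        ∫ a, f x a ∂(Measure.pi fun i => (π i x : Measure (A i))))) :=
  stmt_13_general lam N A πn π hconv f hfc F hF hFsum
end
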